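/- arXiv:2106.05595 — 4 statements merged into one kernel-verified Lean document; each statement's English description precedes it below -/
import Mathlib

section
/- Let n be a positive integer, 1 ≤ p ≤ q < ∞, β ∈ ℝ, and let Ω ⊊ ℝⁿ be a nonempty open set with nonempty complement. Then the (q,p,β)-Hardy–Sobolev inequality holds in Ω with some constant C > 0 if and only if there exists a constant C₁ > 0 such that ∫_E d(x,Ωᶜ)^{(q/p)(n−p+β)−n} dx ≤ C₁ · cap_{p,β}(E,Ω)^{q/p} for every set E ⋐ Ω. -/
open MeasureTheory Metric Set
open scoped ENNReal NNReal

noncomputable section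

/-- The distance from `x` to the complement of `Ω`. -/
def distC {n : ℕ} (Ω : Set (EuclideanSpace ℝ (Fin n))) (x : EuclideanSpace ℝ (Fin n)) : ℝ :=
  Metric.infDist x Ωᶜ

/-- The distance between two sets. -/
def sDist {n : ℕ} (E F : Set (EuclideanSpace ℝ (Fin n))) : ℝ :=
  sInf (Set.image2 dist E F)

/-- A function is admissible for `Ω` if it is Lipschitz and has compact support contained
in `Ω`. -/
def Admissible {n : ℕ} (Ω : Set (EuclideanSpace ℝ (Fin n)))
    (u : EuclideanSpace ℝ (Fin n) → ℝ) : Prop :=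
  (∃ K : NNReal, LipschitzWith K u) ∧ HasCompactSupport u ∧ tsupport u ⊆ Ω

/-- `E` is compactly contained in `Ω`: `E` is bounded and has positive distance to `Ωᶜ`. -/
def CptIn {n : ℕ} (E Ω : Set (EuclideanSpace ℝ (Fin n))) : Prop :=
  Bornology.IsBounded E ∧ 0 < sDist E Ωᶜ

/-- The weighted `p`-energy of `u` on `Ω` with the distance weight `d(x,Ωᶜ)^β`. -/
def energy {n : ℕ} (p β : ℝ) (Ω : Set (EuclideanSpace ℝ (Fin n)))
    (u : EuclideanSpace ℝ (Fin n) → ℝ) : ℝ≥0∞ :=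
  ∫⁻ x in Ω, ENNReal.ofReal (‖fderiv ℝ u x‖ ^ p * distC Ω x ^ β)

/-- The weighted relative `(p,β)`-capacity of `E` in `Ω`. -/
def wcap {n : ℕ} (p β : ℝ) (E Ω : Set (EuclideanSpace ℝ (Fin n))) : ℝ≥0∞ :=
  ⨅ (u : EuclideanSpace ℝ (Fin n) → ℝ)
    (_ : Admissible Ω u ∧ ∀ x ∈ E, 1 ≤ u x), energy p β Ω u

/-- The `(q,p,β)`-Hardy–Sobolev inequality holds in `Ω` with constant `C`. -/
def HardySobolev {n : ℕ} (q p β : ℝ) (Ω : Set (EuclideanSpace ℝ (Fin n))) (C : ℝ) : Prop :=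
  ∀ u : EuclideanSpace ℝ (Fin n) → ℝ, Admissible Ω u →
    (∫⁻ x in Ω, ENNReal.ofReal
        (|u x| ^ q * distC Ω x ^ (q / p * ((n : ℝ) - p + β) - n))) ^ (1 / q) ≤
      ENNReal.ofReal C * (energy p β Ω u) ^ (1 / p)

/-!
Testing the Hardy–Sobolev inequality with admissible `v ≥ 1` on `E` and taking the infimum over
`v` gives the capacity bound.

Conversely (Maz'ya's truncation argument), cut an admissible `u` into the dyadic shells
`2 ^ k ≤ |u| < 2 ^ (k + 1)`. On the `k`-th shell `|u| ^ q ≤ 2 ^ ((k + 1) q)`, and the shell lies in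
the compact level set `{2 ^ k ≤ |u|}`, whose capacity is at most the energy of the truncation of
`|u|` between `2 ^ (k - 1)` and `2 ^ k`; that energy is at most `2 ^ (-(k - 1) p)` times the energy
of `u` on the previous shell. Summing over `k` with `∑ aₖ ^ (q / p) ≤ (∑ aₖ) ^ (q / p)` (as `p ≤ q`)
gives the inequality with `C ^ q = 4 ^ q C₁`.
-/

namespace ENNReal

theorem tsum_rpow_le_rpow_tsum {ι : Type*} (f : ι → ℝ≥0∞) {r : ℝ} (hr : 1 ≤ r) :
    ∑' i, f i ^ r ≤ (∑' i, f i) ^ r := by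
  have hsplit (x : ℝ≥0∞) : x ^ r = x ^ (r - 1) * x := by
    simpa using rpow_add_of_nonneg (x := x) (r - 1) 1 (by linarith) zero_le_one
  calc ∑' i, f i ^ r ≤ ∑' i, (∑' j, f j) ^ (r - 1) * f i := by
        refine ENNReal.tsum_le_tsum fun i => ?_
        rw [hsplit]
        gcongr
        exact ENNReal.le_tsum i
    _ = (∑' i, f i) ^ r := by rw [ENNReal.tsum_mul_left, ← hsplit]

end ENNReal

section Dyadic

open Function

variable {X : Type*}

def dyadicShell (u : X → ℝ) (k : ℤ) : Set X := {x | |u x| ∈ Ico ((2 : ℝ) ^ k) (2 ^ (k + 1))}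

theorem measurableSet_dyadicShell [MeasurableSpace X] {u : X → ℝ} (hu : Measurable u) (k : ℤ) :
    MeasurableSet (dyadicShell u k) :=
  measurableSet_Ico.preimage hu.abs

theorem pairwise_disjoint_dyadicShell (u : X → ℝ) : Pairwise (Disjoint on dyadicShell u) := by
  intro j k hjk
  have := (zpow_right_strictMono₀ (one_lt_two : (1 : ℝ) < 2)).monotone.pairwise_disjoint_on_Ico_succ
    hjk
  simp only [Function.onFun, Order.succ_eq_add_one] at this
  exact this.preimage _

theorem iUnion_dyadicShell (u : X → ℝ) : ⋃ k, dyadicShell u k = {x | u x ≠ 0} := by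
  ext x
  simp only [mem_iUnion, dyadicShell, mem_ofPred_eq]
  constructor
  · rintro ⟨k, hk, -⟩ hx
    simp only [hx, abs_zero] at hk
    exact (zpow_pos two_pos k).not_ge hk
  · exact fun hx => exists_mem_Ico_zpow (abs_pos.2 hx) one_lt_two

theorem lintegral_eq_tsum_setLIntegral_dyadicShell [MeasurableSpace X] {μ : Measure X}
    {u : X → ℝ} (hu : Measurable u) {f : X → ℝ≥0∞} (hf : ∀ x, u x = 0 → f x = 0) :
    ∫⁻ x, f x ∂μ = ∑' k, ∫⁻ x in dyadicShell u k, f x ∂μ := by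
  rw [← lintegral_iUnion (measurableSet_dyadicShell hu) (pairwise_disjoint_dyadicShell u),
    iUnion_dyadicShell, setLIntegral_eq_of_support_subset]
  exact fun x hx hux => hx (hf x hux)

theorem tsum_setLIntegral_dyadicShell_le [MeasurableSpace X] {μ : Measure X} {u : X → ℝ}
    (hu : Measurable u) (f : X → ℝ≥0∞) : ∑' k, ∫⁻ x in dyadicShell u k, f x ∂μ ≤ ∫⁻ x, f x ∂μ := by
  rw [← lintegral_iUnion (measurableSet_dyadicShell hu) (pairwise_disjoint_dyadicShell u)]
  exact setLIntegral_le_lintegral _ _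

end Dyadic

section Ramp

open Filter Topology

def ramp (a b t : ℝ) : ℝ := min 1 (max 0 ((t - a) / (b - a)))

variable {a b : ℝ}

theorem ramp_nonneg (t : ℝ) : 0 ≤ ramp a b t := le_min zero_le_one (le_max_left _ _)

theorem ramp_le_one (t : ℝ) : ramp a b t ≤ 1 := min_le_left _ _

theorem ramp_of_le (hab : a < b) {t : ℝ} (ht : t ≤ a) : ramp a b t = 0 := by
  have : (t - a) / (b - a) ≤ 0 := div_nonpos_of_nonpos_of_nonneg (by linarith) (by linarith)
  simp [ramp, max_eq_left this]

theorem ramp_of_ge (hab : a < b) {t : ℝ} (ht : b ≤ t) : ramp a b t = 1 := by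
  have : 1 ≤ (t - a) / (b - a) := by rw [le_div_iff₀ (by linarith)]; linarith
  simp [ramp, this]

theorem ramp_of_mem_Icc (hab : a < b) {t : ℝ} (ht : t ∈ Icc a b) :
    ramp a b t = (t - a) / (b - a) := by
  have h0 : 0 ≤ (t - a) / (b - a) := div_nonneg (by linarith [ht.1]) (by linarith)
  have h1 : (t - a) / (b - a) ≤ 1 := by rw [div_le_one (by linarith)]; linarith [ht.2]
  simp [ramp, max_eq_right h0, min_eq_right h1]

theorem lipschitzWith_ramp (hab : a < b) : LipschitzWith (b - a)⁻¹.toNNReal (ramp a b) := by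
  have hba : 0 < b - a := by linarith
  have haff : LipschitzWith (b - a)⁻¹.toNNReal fun t => (t - a) / (b - a) :=
    LipschitzWith.of_dist_le_mul fun s t => by
      rw [Real.dist_eq, Real.dist_eq, ← sub_div, sub_sub_sub_cancel_right, abs_div,
        abs_of_pos hba, Real.coe_toNNReal _ (inv_nonneg.2 hba.le), div_eq_inv_mul]
  exact (haff.const_max 0).const_min 1

variable {E : Type*} [NormedAddCommGroup E] [NormedSpace ℝ E]

theorem norm_fderiv_ramp_comp_le (hab : a < b) {g : E → ℝ} {x : E} (hg : ContinuousAt g x) :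
    ‖fderiv ℝ (fun y => ramp a b (g y)) x‖ ≤
      {y | g y ∈ Ioo a b}.indicator (fun y => ‖fderiv ℝ g y‖ / (b - a)) x := by
  by_cases hx : x ∈ {y | g y ∈ Ioo a b}
  · have hloc : (fun y => ramp a b (g y)) =ᶠ[𝓝 x] (b - a)⁻¹ • fun y => g y - a := by
      filter_upwards [hg.preimage_mem_nhds (Ioo_mem_nhds hx.1 hx.2)] with y hy
      rw [ramp_of_mem_Icc hab (Ioo_subset_Icc_self hy), Pi.smul_apply, smul_eq_mul,
        div_eq_inv_mul]
    rw [indicator_of_mem hx, hloc.fderiv_eq, fderiv_const_smul_field, Pi.smul_apply,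
      fderiv_sub_const, norm_smul, Real.norm_eq_abs, abs_inv, abs_of_pos (by linarith),
      inv_mul_eq_div]
  · rw [indicator_of_notMem hx, norm_le_zero_iff]
    rcases not_and_or.1 hx with hle | hge
    · exact IsLocalMin.fderiv_eq_zero <| Eventually.of_forall fun y =>
        (ramp_of_le hab (not_lt.1 hle)).trans_le (ramp_nonneg _)
    · exact IsLocalMax.fderiv_eq_zero <| Eventually.of_forall fun y =>
        (ramp_le_one _).trans_eq (ramp_of_ge hab (not_lt.1 hge)).symm

theorem norm_fderiv_abs_of_ne_zero {u : E → ℝ} {x : E} (hu : ContinuousAt u x) (hx : u x ≠ 0) :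
    ‖fderiv ℝ (fun y => |u y|) x‖ = ‖fderiv ℝ u x‖ := by
  rcases hx.lt_or_gt with hneg | hpos
  · have hloc : (fun y => |u y|) =ᶠ[𝓝 x] fun y => -u y := by
      filter_upwards [hu.eventually (gt_mem_nhds hneg)] with y hy using abs_of_neg hy
    rw [hloc.fderiv_eq, fderiv_fun_neg, norm_neg]
  · have hloc : (fun y => |u y|) =ᶠ[𝓝 x] u := by
      filter_upwards [hu.eventually (lt_mem_nhds hpos)] with y hy using abs_of_pos hy
    rw [hloc.fderiv_eq]

theorem norm_fderiv_ramp_abs_le (ha : 0 ≤ a) (hab : a < b) {u : E → ℝ} (hu : Continuous u)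
    (x : E) :
    ‖fderiv ℝ (fun y => ramp a b |u y|) x‖ ≤
      {y | |u y| ∈ Ioo a b}.indicator (fun y => ‖fderiv ℝ u y‖ / (b - a)) x := by
  refine (norm_fderiv_ramp_comp_le hab hu.abs.continuousAt).trans_eq ?_
  refine congrFun (indicator_congr fun y hy => ?_) x
  have huy : u y ≠ 0 := abs_pos.1 (ha.trans_lt hy.1)
  rw [norm_fderiv_abs_of_ne_zero hu.continuousAt huy]

end Ramp

section Capacity

variable {n : ℕ} {p β : ℝ} {E K Ω : Set (EuclideanSpace ℝ (Fin n))}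
  {u v : EuclideanSpace ℝ (Fin n) → ℝ}

theorem CptIn.subset (h : CptIn E Ω) : E ⊆ Ω := by
  intro x hx
  by_contra hxc
  have hdist_le : sDist E Ωᶜ ≤ 0 :=
    csInf_le ⟨0, by rintro _ ⟨a, -, b, -, rfl⟩; exact dist_nonneg⟩ ⟨x, hx, x, hxc, dist_self x⟩
  exact h.2.not_ge hdist_le

theorem IsCompact.cptIn (hK : IsCompact K) (hne : K.Nonempty) (hΩ : IsOpen Ω)
    (hΩc : Ωᶜ.Nonempty) (hKΩ : K ⊆ Ω) : CptIn K Ω := by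
  obtain ⟨x₀, hx₀, hmin⟩ := hK.exists_isMinOn hne (continuous_infDist_pt Ωᶜ).continuousOn
  have hpos : 0 < infDist x₀ Ωᶜ :=
    (hΩ.isClosed_compl.notMem_iff_infDist_pos hΩc).1 (not_not.2 (hKΩ hx₀))
  refine ⟨hK.isBounded, hpos.trans_le (le_csInf ?_ ?_)⟩
  · exact ⟨_, mem_image2_of_mem hx₀ hΩc.some_mem⟩
  · rintro _ ⟨y, hy, z, hz, rfl⟩
    exact (hmin hy).trans (infDist_le_dist_of_mem hz)

theorem Admissible.cptIn_setOf_le_abs (hu : Admissible Ω u) (hΩ : IsOpen Ω) (hΩc : Ωᶜ.Nonempty)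
    {c : ℝ} (hc : 0 < c) (hne : {x | c ≤ |u x|}.Nonempty) : CptIn {x | c ≤ |u x|} Ω := by
  obtain ⟨⟨K, hK⟩, hcs, hsupp⟩ := hu
  have hsub : {x | c ≤ |u x|} ⊆ tsupport u := fun x hx =>
    subset_closure fun hux => by simp [hux] at hx; linarith
  exact (hcs.of_isClosed_subset (isClosed_le continuous_const hK.continuous.abs) hsub).cptIn hne
    hΩ hΩc (hsub.trans hsupp)

theorem Admissible.ramp_abs (hu : Admissible Ω u) {a b : ℝ} (ha : 0 ≤ a) (hab : a < b) :
    Admissible Ω fun x => ramp a b |u x| := by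
  obtain ⟨⟨K, hK⟩, hcs, hsupp⟩ := hu
  have h0 : ramp a b |0| = 0 := by rw [abs_zero, ramp_of_le hab ha]
  exact ⟨⟨_, (lipschitzWith_ramp hab).comp ((lipschitzWith_one_norm (E := ℝ)).comp hK)⟩,
    hcs.comp_left (g := fun t => ramp a b |t|) h0,
    (tsupport_comp_subset (g := fun t => ramp a b |t|) h0 u).trans hsupp⟩

theorem wcap_le_energy (hv : Admissible Ω v) (hE : ∀ x ∈ E, 1 ≤ v x) :
    wcap p β E Ω ≤ energy p β Ω v :=
  iInf₂_le v ⟨hv, hE⟩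

@[fun_prop]
theorem measurable_distC (Ω : Set (EuclideanSpace ℝ (Fin n))) : Measurable (distC Ω) :=
  (continuous_infDist_pt _).measurable

theorem energy_ramp_abs_le (hp : 0 < p) {a b : ℝ} (ha : 0 ≤ a) (hab : a < b) (hu : Continuous u) :
    energy p β Ω (fun x => ramp a b |u x|) ≤ ENNReal.ofReal ((b - a)⁻¹ ^ p) *
      ∫⁻ x in {x | |u x| ∈ Ioo a b}, ENNReal.ofReal (‖fderiv ℝ u x‖ ^ p * distC Ω x ^ β)
        ∂volume.restrict Ω := by
  have hba : 0 < b - a := by linarith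
  have hS : MeasurableSet {x | |u x| ∈ Ioo a b} := measurableSet_Ioo.preimage hu.measurable.abs
  rw [← lintegral_const_mul' _ _ ENNReal.ofReal_ne_top, ← lintegral_indicator hS]
  refine lintegral_mono fun x => ?_
  have hw : 0 ≤ distC Ω x ^ β := Real.rpow_nonneg infDist_nonneg β
  have hbound := norm_fderiv_ramp_abs_le ha hab hu x
  by_cases hx : x ∈ {x | |u x| ∈ Ioo a b}
  · rw [indicator_of_mem hx] at hbound ⊢
    rw [← ENNReal.ofReal_mul (by positivity)]
    refine ENNReal.ofReal_le_ofReal ?_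
    calc ‖fderiv ℝ (fun x => ramp a b |u x|) x‖ ^ p * distC Ω x ^ β
        ≤ (‖fderiv ℝ u x‖ / (b - a)) ^ p * distC Ω x ^ β := by gcongr
      _ = (b - a)⁻¹ ^ p * (‖fderiv ℝ u x‖ ^ p * distC Ω x ^ β) := by
        rw [Real.div_rpow (norm_nonneg _) hba.le, Real.inv_rpow hba.le]; ring
  · rw [indicator_of_notMem hx] at hbound ⊢
    simp [norm_le_zero_iff.1 hbound, Real.zero_rpow hp.ne']

end Capacity

section HardySobolev

variable {n : ℕ} {p q β σ C₁ : ℝ} {E Ω : Set (EuclideanSpace ℝ (Fin n))}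
  {u : EuclideanSpace ℝ (Fin n) → ℝ}

theorem hardySobolev_iff {C : ℝ} (hq : 0 < q) (hC : 0 ≤ C) :
    HardySobolev q p β Ω C ↔ ∀ u, Admissible Ω u →
      ∫⁻ x in Ω, ENNReal.ofReal (|u x| ^ q * distC Ω x ^ (q / p * ((n : ℝ) - p + β) - n)) ≤
        ENNReal.ofReal (C ^ q) * energy p β Ω u ^ (q / p) := by
  refine forall₂_congr fun u _ => ?_
  rw [one_div, ENNReal.rpow_inv_le_iff hq, ENNReal.mul_rpow_of_nonneg _ _ hq.le,
    ← ENNReal.rpow_mul, ENNReal.ofReal_rpow_of_nonneg hC hq.le, one_div_mul_eq_div]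

theorem setLIntegral_le_mul_wcap_rpow {r : ℝ} {c : ℝ≥0∞} (hq : 0 < q) (hr : 0 < r) (hc₀ : c ≠ 0)
    (hc : c ≠ ⊤) (hE : CptIn E Ω)
    (hHS : ∀ u, Admissible Ω u →
      ∫⁻ x in Ω, ENNReal.ofReal (|u x| ^ q * distC Ω x ^ σ) ≤ c * energy p β Ω u ^ r) :
    ∫⁻ x in E, ENNReal.ofReal (distC Ω x ^ σ) ≤ c * wcap p β E Ω ^ r := by
  have htest (v) (hv : Admissible Ω v) (hvE : ∀ x ∈ E, 1 ≤ v x) :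
      ∫⁻ x in E, ENNReal.ofReal (distC Ω x ^ σ) ≤ c * energy p β Ω v ^ r := by
    have hvm : Measurable v := hv.1.choose_spec.continuous.measurable
    calc ∫⁻ x in E, ENNReal.ofReal (distC Ω x ^ σ)
        ≤ ∫⁻ x in E, ENNReal.ofReal (|v x| ^ q * distC Ω x ^ σ) := by
          refine setLIntegral_mono (by fun_prop) fun x hx => ENNReal.ofReal_le_ofReal ?_
          refine le_mul_of_one_le_left (Real.rpow_nonneg infDist_nonneg σ) ?_
          exact Real.one_le_rpow ((hvE x hx).trans (le_abs_self _)) hq.le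
      _ ≤ ∫⁻ x in Ω, ENNReal.ofReal (|v x| ^ q * distC Ω x ^ σ) := lintegral_mono_set hE.subset
      _ ≤ c * energy p β Ω v ^ r := hHS v hv
  rw [← ENNReal.div_le_iff' hc₀ hc, ← ENNReal.rpow_inv_le_iff hr]
  exact le_iInf₂ fun v hv => (ENNReal.rpow_inv_le_iff hr).2 <|
    ENNReal.div_le_of_le_mul' (htest v hv.1 hv.2)

theorem setLIntegral_abs_mem_Ico_le_of_wcap (hp : 0 < p) (hq : 0 < q) (hΩ : IsOpen Ω)
    (hΩc : Ωᶜ.Nonempty)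
    (hcap : ∀ E, CptIn E Ω →
      ∫⁻ x in E, ENNReal.ofReal (distC Ω x ^ σ) ≤ ENNReal.ofReal C₁ * wcap p β E Ω ^ (q / p))
    (hu : Admissible Ω u) {t : ℝ} (ht : 0 < t) :
    ∫⁻ x in {x | |u x| ∈ Ico (2 * t) (4 * t)}, ENNReal.ofReal (|u x| ^ q * distC Ω x ^ σ)
        ∂volume.restrict Ω ≤
      ENNReal.ofReal C₁ * (ENNReal.ofReal (4 ^ p) *
        ∫⁻ x in {x | |u x| ∈ Ioo t (2 * t)}, ENNReal.ofReal (‖fderiv ℝ u x‖ ^ p * distC Ω x ^ β)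
          ∂volume.restrict Ω) ^ (q / p) := by
  set L := {x | 2 * t ≤ |u x|}
  -- `CptIn ∅ Ω` fails (`sInf ∅ = 0`), so an empty level set is treated apart.
  rcases L.eq_empty_or_nonempty with hL | hL
  · have hshell : {x | |u x| ∈ Ico (2 * t) (4 * t)} = ∅ :=
      eq_empty_of_subset_empty fun x hx => hL ▸ hx.1
    rw [hshell, Measure.restrict_empty, lintegral_zero_measure]
    exact zero_le
  have henergy := energy_ramp_abs_le (β := β) (Ω := Ω) hp ht.le (by linarith : t < 2 * t)
    hu.1.choose_spec.continuous
  rw [show 2 * t - t = t by ring] at henergy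
  have hpow : ENNReal.ofReal ((4 * t) ^ q) = ENNReal.ofReal ((4 * t) ^ p) ^ (q / p) := by
    rw [ENNReal.ofReal_rpow_of_nonneg (by positivity) (by positivity), ← Real.rpow_mul
      (by positivity), mul_div_cancel₀ _ hp.ne']
  calc ∫⁻ x in {x | |u x| ∈ Ico (2 * t) (4 * t)}, ENNReal.ofReal (|u x| ^ q * distC Ω x ^ σ)
        ∂volume.restrict Ω
      ≤ ∫⁻ x in {x | |u x| ∈ Ico (2 * t) (4 * t)},
          ENNReal.ofReal ((4 * t) ^ q) * ENNReal.ofReal (distC Ω x ^ σ) ∂volume.restrict Ω := by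
        refine setLIntegral_mono (by fun_prop) fun x hx => ?_
        rw [← ENNReal.ofReal_mul (by positivity)]
        gcongr
        · exact Real.rpow_nonneg infDist_nonneg σ
        · exact hx.2.le
    _ ≤ ENNReal.ofReal ((4 * t) ^ q) * ∫⁻ x in L, ENNReal.ofReal (distC Ω x ^ σ) := by
        rw [lintegral_const_mul _ (by fun_prop)]
        gcongr ENNReal.ofReal ((4 * t) ^ q) * ?_
        exact lintegral_mono' (Measure.restrict_mono (fun x hx => hx.1) Measure.restrict_le_self)
          le_rfl
    _ ≤ ENNReal.ofReal ((4 * t) ^ q) *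
          (ENNReal.ofReal C₁ * energy p β Ω (fun x => ramp t (2 * t) |u x|) ^ (q / p)) := by
        have hL_cpt := hu.cptIn_setOf_le_abs hΩ hΩc (by positivity : 0 < 2 * t) hL
        refine mul_le_mul_right ((hcap L hL_cpt).trans ?_) _
        gcongr
        exact wcap_le_energy (hu.ramp_abs ht.le (by linarith))
          fun x hx => (ramp_of_ge (by linarith) hx).ge
    _ ≤ ENNReal.ofReal ((4 * t) ^ q) * (ENNReal.ofReal C₁ * (ENNReal.ofReal (t⁻¹ ^ p) *
          ∫⁻ x in {x | |u x| ∈ Ioo t (2 * t)},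
            ENNReal.ofReal (‖fderiv ℝ u x‖ ^ p * distC Ω x ^ β) ∂volume.restrict Ω) ^ (q / p)) := by
        exact mul_le_mul_right (mul_le_mul_right (ENNReal.rpow_le_rpow henergy (by positivity)) _) _
    _ = _ := by
        rw [hpow, mul_left_comm, ← ENNReal.mul_rpow_of_nonneg _ _ (by positivity), ← mul_assoc,
          ← ENNReal.ofReal_mul (by positivity), ← Real.mul_rpow (by positivity) (by positivity),
          mul_inv_cancel_right₀ ht.ne']

theorem lintegral_abs_rpow_le_of_wcap (hp : 0 < p) (hpq : p ≤ q) (hΩ : IsOpen Ω) (hΩc : Ωᶜ.Nonempty)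
    (hcap : ∀ E, CptIn E Ω →
      ∫⁻ x in E, ENNReal.ofReal (distC Ω x ^ σ) ≤ ENNReal.ofReal C₁ * wcap p β E Ω ^ (q / p))
    (hu : Admissible Ω u) :
    ∫⁻ x in Ω, ENNReal.ofReal (|u x| ^ q * distC Ω x ^ σ) ≤
      ENNReal.ofReal (C₁ * 4 ^ q) * energy p β Ω u ^ (q / p) := by
  have hq : 0 < q := hp.trans_le hpq
  have hum : Measurable u := hu.1.choose_spec.continuous.measurable
  set G : ℤ → ℝ≥0∞ := fun k => ∫⁻ x in dyadicShell u k,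
    ENNReal.ofReal (‖fderiv ℝ u x‖ ^ p * distC Ω x ^ β) ∂volume.restrict Ω
  have hshell (k : ℤ) :
      dyadicShell u (k + 1) = {x | |u x| ∈ Ico (2 * 2 ^ k) (4 * 2 ^ k)} := by
    ext x
    simp only [dyadicShell, mem_ofPred_eq, zpow_add_one₀ (two_ne_zero' ℝ)]
    ring_nf
  have hgrad (k : ℤ) : {x | |u x| ∈ Ioo (2 ^ k) (2 * 2 ^ k)} ⊆ dyadicShell u k := fun x hx =>
    ⟨hx.1.le, by rw [zpow_add_one₀ two_ne_zero, mul_comm]; exact hx.2⟩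
  calc ∫⁻ x in Ω, ENNReal.ofReal (|u x| ^ q * distC Ω x ^ σ)
      = ∑' k, ∫⁻ x in dyadicShell u (k + 1), ENNReal.ofReal (|u x| ^ q * distC Ω x ^ σ)
          ∂volume.restrict Ω := by
        rw [lintegral_eq_tsum_setLIntegral_dyadicShell hum fun x hx => by
          simp [hx, Real.zero_rpow hq.ne']]
        exact ((Equiv.addRight 1).tsum_eq _).symm
    _ ≤ ∑' k, ENNReal.ofReal C₁ * (ENNReal.ofReal (4 ^ p) * G k) ^ (q / p) := by
        refine ENNReal.tsum_le_tsum fun k => ?_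
        rw [hshell]
        refine (setLIntegral_abs_mem_Ico_le_of_wcap hp hq hΩ hΩc hcap hu
          (zpow_pos two_pos k)).trans ?_
        gcongr
        exact lintegral_mono_set (hgrad k)
    _ ≤ ENNReal.ofReal C₁ * (ENNReal.ofReal (4 ^ p) * ∑' k, G k) ^ (q / p) := by
        rw [ENNReal.tsum_mul_left, ← ENNReal.tsum_mul_left (a := ENNReal.ofReal (4 ^ p))]
        gcongr
        exact ENNReal.tsum_rpow_le_rpow_tsum _ ((one_le_div hp).2 hpq)
    _ ≤ ENNReal.ofReal C₁ * (ENNReal.ofReal (4 ^ p) * energy p β Ω u) ^ (q / p) := by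
        gcongr
        exact tsum_setLIntegral_dyadicShell_le hum _
    _ = ENNReal.ofReal (C₁ * 4 ^ q) * energy p β Ω u ^ (q / p) := by
        rw [ENNReal.mul_rpow_of_nonneg _ _ (by positivity), ENNReal.ofReal_rpow_of_nonneg
          (by positivity) (by positivity), ← Real.rpow_mul (by norm_num),
          mul_div_cancel₀ _ hp.ne', ENNReal.ofReal_mul' (by positivity), mul_assoc]

end HardySobolev

theorem stmt0_general {n : ℕ} (p q β : ℝ) (hp : 1 ≤ p) (hpq : p ≤ q)
    (Ω : Set (EuclideanSpace ℝ (Fin n))) (hΩopen : IsOpen Ω)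
    (hΩcne : Ωᶜ.Nonempty) :
    (∃ C > 0, HardySobolev q p β Ω C) ↔
      ∃ C₁ > 0, ∀ E : Set (EuclideanSpace ℝ (Fin n)), CptIn E Ω →
        (∫⁻ x in E, ENNReal.ofReal (distC Ω x ^ (q / p * ((n : ℝ) - p + β) - n))) ≤
          ENNReal.ofReal C₁ * (wcap p β E Ω) ^ (q / p) := by
  have hp₀ : 0 < p := by linarith
  have hq₀ : 0 < q := by linarith
  constructor
  · rintro ⟨C, hC, hHS⟩
    refine ⟨C ^ q, by positivity, fun E hE => ?_⟩
    exact setLIntegral_le_mul_wcap_rpow hq₀ (div_pos hq₀ hp₀)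
      (ENNReal.ofReal_pos.2 (by positivity)).ne' ENNReal.ofReal_ne_top hE
      ((hardySobolev_iff hq₀ hC.le).1 hHS)
  · rintro ⟨C₁, hC₁, hcap⟩
    refine ⟨(C₁ * 4 ^ q) ^ (1 / q), by positivity, ?_⟩
    rw [hardySobolev_iff hq₀ (by positivity), ← Real.rpow_mul (by positivity),
      one_div_mul_cancel hq₀.ne', Real.rpow_one]
    exact fun u hu => lintegral_abs_rpow_le_of_wcap hp₀ hpq hΩopen hΩcne hcap hu

/-- Maz'ya-type characterization of the weighted Hardy–Sobolev inequality. -/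
theorem stmt0 {n : ℕ} (hn : 0 < n) (p q β : ℝ) (hp : 1 ≤ p) (hpq : p ≤ q)
    (Ω : Set (EuclideanSpace ℝ (Fin n))) (hΩopen : IsOpen Ω) (hΩne : Ω.Nonempty)
    (hΩcne : Ωᶜ.Nonempty) :
    (∃ C > 0, HardySobolev q p β Ω C) ↔
      ∃ C₁ > 0, ∀ E : Set (EuclideanSpace ℝ (Fin n)), CptIn E Ω →
        (∫⁻ x in E, ENNReal.ofReal (distC Ω x ^ (q / p * ((n : ℝ) - p + β) - n))) ≤
          ENNReal.ofReal C₁ * (wcap p β E Ω) ^ (q / p) :=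
  stmt0_general p q β hp hpq Ω hΩopen hΩcne
end
end

section
/- Let n be a positive integer, 1 ≤ p, q < ∞, β ∈ ℝ, and let Ω ⊊ ℝⁿ be a nonempty open set with nonempty complement. If the (q,p,β)-Hardy–Sobolev inequality holds in Ω with constant C > 0, then ∫_E d(x,Ωᶜ)^{(q/p)(n−p+β)−n} dx ≤ C^q · cap_{p,β}(E,Ω)^{q/p} for every set E ⋐ Ω. -/
open MeasureTheory Metric Set
open scoped ENNReal NNReal

noncomputable section

/-- The Hardy–Sobolev inequality implies the Maz'ya-type capacity estimate. -/
theorem stmt1 {n : ℕ} (hn : 0 < n) (p q β : ℝ) (hp : 1 ≤ p) (hq : 1 ≤ q)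
    (Ω : Set (EuclideanSpace ℝ (Fin n))) (hΩopen : IsOpen Ω) (hΩne : Ω.Nonempty)
    (hΩcne : Ωᶜ.Nonempty) (C : ℝ) (hC : 0 < C) (hHS : HardySobolev q p β Ω C) :
    ∀ E : Set (EuclideanSpace ℝ (Fin n)), CptIn E Ω →
      (∫⁻ x in E, ENNReal.ofReal (distC Ω x ^ (q / p * ((n : ℝ) - p + β) - n))) ≤
        ENNReal.ofReal (C ^ q) * (wcap p β E Ω) ^ (q / p) := by
  intro E hE
  have hp0 : (0:ℝ) < p := lt_of_lt_of_le one_pos hp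
  have hq0 : (0:ℝ) < q := lt_of_lt_of_le one_pos hq
  set c : ℝ≥0∞ := ENNReal.ofReal (C ^ q) with hc
  have hc0 : c ≠ 0 := (ENNReal.ofReal_pos.mpr (Real.rpow_pos_of_pos hC q)).ne'
  have hct : c ≠ ⊤ := ENNReal.ofReal_ne_top
  set I : ℝ≥0∞ := ∫⁻ x in E, ENNReal.ofReal (distC Ω x ^ (q / p * ((n : ℝ) - p + β) - n)) with hI
  -- key estimate for each admissible test function
  have key : ∀ u : EuclideanSpace ℝ (Fin n) → ℝ,
      (Admissible Ω u ∧ ∀ x ∈ E, 1 ≤ u x) →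
      I ≤ c * (energy p β Ω u) ^ (q / p) := by
    rintro u ⟨hadm, huE⟩
    obtain ⟨K, hK⟩ := hadm.1
    have hu : Continuous u := hK.continuous
    set F : Set (EuclideanSpace ℝ (Fin n)) := {x | 1 ≤ u x} with hF
    have hFc : IsClosed F := isClosed_le continuous_const hu
    have hEF : E ⊆ F := fun x hx => huE x hx
    have hFΩ : F ⊆ Ω := by
      intro x hx
      exact hadm.2.2 (subset_tsupport u (by
        simp only [Function.mem_support]
        have : (1:ℝ) ≤ u x := hx
        linarith))
    have step1 : I ≤ ∫⁻ x in F,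
        ENNReal.ofReal (distC Ω x ^ (q / p * ((n : ℝ) - p + β) - n)) :=
      lintegral_mono_set hEF
    have step2 : (∫⁻ x in F,
        ENNReal.ofReal (distC Ω x ^ (q / p * ((n : ℝ) - p + β) - n))) ≤
        ∫⁻ x in F, ENNReal.ofReal
          (|u x| ^ q * distC Ω x ^ (q / p * ((n : ℝ) - p + β) - n)) := by
      refine lintegral_mono_ae ?_
      filter_upwards [ae_restrict_mem hFc.measurableSet] with x hx
      refine ENNReal.ofReal_le_ofReal ?_
      have h1 : (1:ℝ) ≤ |u x| := le_trans hx (le_abs_self _)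
      have h2 : (1:ℝ) ≤ |u x| ^ q := by
        calc (1:ℝ) = (1:ℝ) ^ q := (Real.one_rpow q).symm
        _ ≤ |u x| ^ q := Real.rpow_le_rpow zero_le_one h1 hq0.le
      exact le_mul_of_one_le_left (Real.rpow_nonneg Metric.infDist_nonneg _) h2
    have step3 : (∫⁻ x in F, ENNReal.ofReal
          (|u x| ^ q * distC Ω x ^ (q / p * ((n : ℝ) - p + β) - n))) ≤
        ∫⁻ x in Ω, ENNReal.ofReal
          (|u x| ^ q * distC Ω x ^ (q / p * ((n : ℝ) - p + β) - n)) :=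
      lintegral_mono_set hFΩ
    have hHSu := hHS u hadm
    have hpow := ENNReal.rpow_le_rpow hHSu hq0.le
    rw [← ENNReal.rpow_mul, one_div_mul_cancel hq0.ne', ENNReal.rpow_one,
      ENNReal.mul_rpow_of_nonneg _ _ hq0.le, ← ENNReal.rpow_mul,
      ENNReal.ofReal_rpow_of_pos hC] at hpow
    have hexp : 1 / p * q = q / p := by ring
    rw [hexp] at hpow
    exact le_trans (le_trans (le_trans step1 step2) step3) hpow
  -- pass to the infimum
  have ha : (I / c) ^ (p / q) ≤ wcap p β E Ω := by
    refine le_iInf fun u => le_iInf fun h => ?_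
    have h1 : I / c ≤ (energy p β Ω u) ^ (q / p) :=
      ENNReal.div_le_of_le_mul (by have := key u h; rwa [mul_comm] at this)
    have h2 := ENNReal.rpow_le_rpow h1 (by positivity : (0:ℝ) ≤ p / q)
    rwa [← ENNReal.rpow_mul, div_mul_div_comm, mul_comm q p, div_self (by positivity),
      ENNReal.rpow_one] at h2
  have h3 := ENNReal.rpow_le_rpow ha (by positivity : (0:ℝ) ≤ q / p)
  rw [← ENNReal.rpow_mul, div_mul_div_comm, mul_comm p q, div_self (by positivity),
    ENNReal.rpow_one] at h3
  rw [mul_comm]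
  exact (ENNReal.div_le_iff_le_mul (Or.inl hc0) (Or.inl hct)).mp h3
end
end

section
/- Let n be a positive integer, 1 ≤ p, q < ∞, β ∈ ℝ, 0 < c < 1/3, and let Ω ⊊ ℝⁿ be a nonempty open set with nonempty complement. Assume that the (q,p,β)-Hardy–Sobolev inequality holds in Ω with some constant C > 0. Then there exists a constant C' > 0 such that for every x ∈ Ω, setting r = c·d(x,Ωᶜ), one has cap_{p,β}(B(x,r),Ω) ≥ C' · r^{n+β−p}. -/
open MeasureTheory Metric Set
open scoped ENNReal NNReal

noncomputable section

/-! On a Whitney ball `B = B(x, r)`, `r = c d(x,Ωᶜ)` with `c < 1`, the weight `d(·,Ωᶜ)` is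
comparable to `d(x,Ωᶜ) = r / c`. So if `u ≥ 1` on `B`, the left-hand side of the Hardy–Sobolev
inequality is at least a constant times `(r ^ γ |B|) ^ (1/q) ≍ r ^ ((n + γ)/q) = r ^ ((n + β - p)/p)`,
`γ` being the exponent of the weight; raising the inequality to the power `p` bounds the energy of
every test function for `B` below by a constant times `r ^ (n + β - p)`. -/

lemma min_rpow_le_rpow_of_mem_Icc {a b t : ℝ} (ha : 0 < a) (hat : a ≤ t) (htb : t ≤ b) (γ : ℝ) :
    min (a ^ γ) (b ^ γ) ≤ t ^ γ := by
  rcases le_total 0 γ with hγ | hγ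
  · exact (min_le_left _ _).trans (Real.rpow_le_rpow ha.le hat hγ)
  · exact (min_le_right _ _).trans (Real.rpow_le_rpow_of_nonpos (ha.trans_le hat) htb hγ)

lemma ofReal_mul_measure_le_setLIntegral {α : Type*} [MeasurableSpace α] {μ : Measure α}
    {s t : Set α} {f : α → ℝ} {w : ℝ} (hs : MeasurableSet s) (hst : s ⊆ t)
    (hw : ∀ y ∈ s, w ≤ f y) :
    ENNReal.ofReal w * μ s ≤ ∫⁻ y in t, ENNReal.ofReal (f y) ∂μ :=
  calc ENNReal.ofReal w * μ s = ∫⁻ _ in s, ENNReal.ofReal w ∂μ := (setLIntegral_const s _).symm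
    _ ≤ ∫⁻ y in s, ENNReal.ofReal (f y) ∂μ :=
      setLIntegral_mono' hs fun y hy => ENNReal.ofReal_le_ofReal (hw y hy)
    _ ≤ ∫⁻ y in t, ENNReal.ofReal (f y) ∂μ := lintegral_mono_set hst

lemma ofReal_div_rpow_le_of_le_ofReal_mul_rpow {a C p : ℝ} {E : ℝ≥0∞} (ha : 0 ≤ a) (hC : 0 < C)
    (hp : 0 < p) (h : ENNReal.ofReal a ≤ ENNReal.ofReal C * E ^ (1 / p)) :
    ENNReal.ofReal ((a / C) ^ p) ≤ E := by
  have hdiv : ENNReal.ofReal (a / C) ≤ E ^ p⁻¹ := by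
    rw [ENNReal.ofReal_div_of_pos hC, ENNReal.div_le_iff_le_mul (.inl (by simpa using hC))
      (.inl ENNReal.ofReal_ne_top), mul_comm, ← one_div]
    exact h
  rw [← ENNReal.ofReal_rpow_of_nonneg (by positivity) hp.le]
  exact (ENNReal.le_rpow_inv_iff hp).1 hdiv

section Whitney

variable {n : ℕ} {Ω : Set (EuclideanSpace ℝ (Fin n))} {x y : EuclideanSpace ℝ (Fin n)} {c : ℝ}

lemma distC_pos_of_mem (hΩ : IsOpen Ω) (hΩc : Ωᶜ.Nonempty) (hx : x ∈ Ω) : 0 < distC Ω x :=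
  (hΩ.isClosed_compl.notMem_iff_infDist_pos hΩc).1 (not_not_intro hx)

lemma ball_mul_distC_subset (hc : c ≤ 1) : ball x (c * distC Ω x) ⊆ Ω :=
  (ball_subset_ball (mul_le_of_le_one_left infDist_nonneg hc)).trans ball_infDist_compl_subset

lemma one_sub_mul_distC_le (hy : y ∈ ball x (c * distC Ω x)) :
    (1 - c) * distC Ω x ≤ distC Ω y := by
  have := infDist_le_infDist_add_dist (s := Ωᶜ) (x := x) (y := y)
  rw [dist_comm] at this
  unfold distC at hy ⊢
  linarith [mem_ball.1 hy]

lemma distC_le_one_add_mul (hy : y ∈ ball x (c * distC Ω x)) :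
    distC Ω y ≤ (1 + c) * distC Ω x := by
  have := infDist_le_infDist_add_dist (s := Ωᶜ) (x := y) (y := x)
  unfold distC at hy ⊢
  linarith [mem_ball.1 hy]

lemma min_rpow_mul_le_distC_rpow (hc : c < 1) (hx : 0 < distC Ω x)
    (hy : y ∈ ball x (c * distC Ω x)) (γ : ℝ) :
    min ((1 - c) ^ γ) ((1 + c) ^ γ) * distC Ω x ^ γ ≤ distC Ω y ^ γ := by
  have hc₀ : 0 < c := by nlinarith [dist_nonneg (x := y) (y := x), mem_ball.1 hy]
  have hc₁ : 0 < 1 - c := by linarith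
  rw [min_mul_of_nonneg _ _ (by positivity), ← Real.mul_rpow hc₁.le hx.le,
    ← Real.mul_rpow (by linarith) hx.le]
  exact min_rpow_le_rpow_of_mem_Icc (by positivity) (one_sub_mul_distC_le hy)
    (distC_le_one_add_mul hy) γ

def whitneyConst (n : ℕ) (c γ : ℝ) : ℝ :=
  (volume (ball (0 : EuclideanSpace ℝ (Fin n)) 1)).toReal * min ((1 - c) ^ γ) ((1 + c) ^ γ) *
    c ^ (-γ)

lemma whitneyConst_pos (hc : 0 < c) (hc₁ : c < 1) (γ : ℝ) : 0 < whitneyConst n c γ := by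
  have hV : 0 < (volume (ball (0 : EuclideanSpace ℝ (Fin n)) 1)).toReal :=
    ENNReal.toReal_pos (measure_ball_pos _ _ one_pos).ne' measure_ball_lt_top.ne
  have hc₂ : 0 < 1 - c := by linarith
  unfold whitneyConst
  positivity

lemma whitneyConst_mul_rpow_le_lintegral (hc : 0 < c) (hc₁ : c < 1) (hx : 0 < distC Ω x)
    {q : ℝ} (hq : 0 ≤ q) {u : EuclideanSpace ℝ (Fin n) → ℝ}
    (hu : ∀ y ∈ ball x (c * distC Ω x), 1 ≤ u y) (γ : ℝ) :
    ENNReal.ofReal (whitneyConst n c γ * (c * distC Ω x) ^ ((n : ℝ) + γ)) ≤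
      ∫⁻ y in Ω, ENNReal.ofReal (|u y| ^ q * distC Ω y ^ γ) := by
  set d := distC Ω x
  set m := min ((1 - c) ^ γ) ((1 + c) ^ γ)
  have hr : 0 < c * d := mul_pos hc hx
  have hbound := ofReal_mul_measure_le_setLIntegral (μ := volume) (w := m * d ^ γ)
    (f := fun y => |u y| ^ q * distC Ω y ^ γ) measurableSet_ball
    (ball_mul_distC_subset hc₁.le) fun y hy => by
      have h1 : 1 ≤ |u y| ^ q := Real.one_le_rpow ((hu y hy).trans (le_abs_self _)) hq
      simpa using mul_le_mul h1 (min_rpow_mul_le_distC_rpow hc₁ hx hy γ) (by positivity)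
        (by positivity)
  refine le_of_eq_of_le ?_ hbound
  have hd : d ^ γ = c ^ (-γ) * (c * d) ^ γ := by
    rw [Real.mul_rpow hc.le hx.le, Real.rpow_neg hc.le, inv_mul_cancel_left₀ (by positivity)]
  rw [Measure.addHaar_ball_of_pos _ _ hr, finrank_euclideanSpace_fin,
    ← ENNReal.ofReal_toReal (measure_ball_lt_top (x := (0 : EuclideanSpace ℝ (Fin n)))).ne,
    ← ENNReal.ofReal_mul (by positivity), ← ENNReal.ofReal_mul (by positivity), whitneyConst,
    Real.rpow_add hr, Real.rpow_natCast, hd]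
  simp only [m]
  congr 1
  ring

end Whitney

theorem stmt3_general {n : ℕ} (p q β c : ℝ) (hp : 1 ≤ p) (hq : 1 ≤ q)
    (hc : 0 < c) (hc' : c < 1 / 3)
    (Ω : Set (EuclideanSpace ℝ (Fin n))) (hΩopen : IsOpen Ω)
    (hΩcne : Ωᶜ.Nonempty) (C : ℝ) (hC : 0 < C) (hHS : HardySobolev q p β Ω C) :
    ∃ C' > 0, ∀ x ∈ Ω,
      ENNReal.ofReal (C' * (c * distC Ω x) ^ ((n : ℝ) + β - p)) ≤
        wcap p β (Metric.ball x (c * distC Ω x)) Ω := by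
  set γ := q / p * ((n : ℝ) - p + β) - n
  set K := whitneyConst n c γ
  have hp₀ : 0 < p := by linarith
  have hq₀ : 0 < q := by linarith
  have hc₁ : c < 1 := by linarith
  have hK : 0 < K := whitneyConst_pos hc hc₁ γ
  refine ⟨(K ^ (1 / q) / C) ^ p, by positivity, fun x hx => le_iInf₂ fun u ⟨hu, hu₁⟩ => ?_⟩
  have hd := distC_pos_of_mem hΩopen hΩcne hx
  set r := c * distC Ω x
  have hr : 0 < r := mul_pos hc hd
  have hexp : ((n : ℝ) + γ) * (1 / q) = ((n : ℝ) + β - p) / p := by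
    simp only [γ]; field_simp; ring
  have hLHS := ENNReal.rpow_le_rpow
    (whitneyConst_mul_rpow_le_lintegral hc hc₁ hd hq₀.le hu₁ γ) (by positivity : 0 ≤ 1 / q)
  rw [ENNReal.ofReal_rpow_of_pos (by positivity), Real.mul_rpow hK.le (by positivity),
    ← Real.rpow_mul hr.le, hexp] at hLHS
  refine le_of_eq_of_le (congrArg ENNReal.ofReal ?_)
    (ofReal_div_rpow_le_of_le_ofReal_mul_rpow (by positivity) hC hp₀ (hLHS.trans (hHS u hu)))
  rw [mul_div_right_comm, Real.mul_rpow (x := K ^ (1 / q) / C) (by positivity) (by positivity),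
    ← Real.rpow_mul hr.le, div_mul_cancel₀ _ hp₀.ne']

/-- The Hardy–Sobolev inequality implies a capacity lower bound for Whitney balls. -/
theorem stmt3 {n : ℕ} (hn : 0 < n) (p q β c : ℝ) (hp : 1 ≤ p) (hq : 1 ≤ q)
    (hc : 0 < c) (hc' : c < 1 / 3)
    (Ω : Set (EuclideanSpace ℝ (Fin n))) (hΩopen : IsOpen Ω) (hΩne : Ω.Nonempty)
    (hΩcne : Ωᶜ.Nonempty) (C : ℝ) (hC : 0 < C) (hHS : HardySobolev q p β Ω C) :
    ∃ C' > 0, ∀ x ∈ Ω,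
      ENNReal.ofReal (C' * (c * distC Ω x) ^ ((n : ℝ) + β - p)) ≤
        wcap p β (Metric.ball x (c * distC Ω x)) Ω :=
  stmt3_general p q β c hp hq hc hc' Ω hΩopen hΩcne C hC hHS
end
end

section
/- Let (X,d,μ) be a metric measure space with μ a doubling Borel measure that is positive and finite on balls, and let Ω ⊊ X be a nonempty open set with nonempty complement. Let L > 1 and 0 < c ≤ 1/(3L), and let {B_i = B(x_i, c·d(x_i,Ωᶜ)) : i ∈ ℕ} be a countable family of balls with centers x_i ∈ Ω such that Σ_{i∈ℕ} χ_{B_i}(x) ≤ N for every x ∈ Ω, for some constant N ≥ 1. Then there exists a constant M ∈ ℕ, depending only on the doubling constant C_μ, c, L and N, such that Σ_{i∈ℕ} χ_{L·B_i}(x) ≤ M for every x ∈ Ω, where L·B_i = B(x_i, L·c·d(x_i,Ωᶜ)). -/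
open MeasureTheory Metric Set
open scoped ENNReal NNReal

noncomputable section

/-- Bounded overlap of dilated Whitney balls: if the Whitney-type balls
`B(xᵢ, c·d(xᵢ,Ωᶜ))` have bounded overlap and `c ≤ 1/(3L)`, then the dilated balls
`L·Bᵢ = B(xᵢ, L·c·d(xᵢ,Ωᶜ))` also have bounded overlap. -/
theorem stmt14 {X : Type*} [MetricSpace X] [MeasurableSpace X] [BorelSpace X]
    (μ : Measure X) (Cμ : ℝ) (hCμ : 1 ≤ Cμ)
    (hball : ∀ (x : X) (r : ℝ), 0 < r → 0 < μ (Metric.ball x r) ∧ μ (Metric.ball x r) < ⊤)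
    (hdouble : ∀ (x : X) (r : ℝ), 0 < r →
      μ (Metric.ball x (2 * r)) ≤ ENNReal.ofReal Cμ * μ (Metric.ball x r))
    (Ω : Set X) (hΩopen : IsOpen Ω) (hΩne : Ω.Nonempty) (hΩcne : Ωᶜ.Nonempty)
    (L c : ℝ) (hL : 1 < L) (hc : 0 < c) (hcL : c ≤ 1 / (3 * L))
    (xc : ℕ → X) (hxc : ∀ i, xc i ∈ Ω) (N : ℝ) (hN : 1 ≤ N)
    (hover : ∀ x ∈ Ω,
      ∑' i, (Metric.ball (xc i) (c * Metric.infDist (xc i) Ωᶜ)).indicator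
          (fun _ => (1 : ℝ≥0∞)) x ≤ ENNReal.ofReal N) :
    ∃ M : ℕ, ∀ x ∈ Ω,
      ∑' i, (Metric.ball (xc i) (L * (c * Metric.infDist (xc i) Ωᶜ))).indicator
          (fun _ => (1 : ℝ≥0∞)) x ≤ M := by
  classical
  obtain ⟨k, hk⟩ := pow_unbounded_of_one_lt (5 / (3 * c)) (by norm_num : (1:ℝ) < 2)
  have hkc' : (5:ℝ)/3 ≤ 2 ^ k * c := by
    rw [div_lt_iff₀ (by positivity)] at hk
    nlinarith
  have hiter : ∀ (m : ℕ) (y : X) (r : ℝ), 0 < r →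
      μ (Metric.ball y (2 ^ m * r)) ≤ (ENNReal.ofReal Cμ) ^ m * μ (Metric.ball y r) := by
    intro m
    induction m with
    | zero => intro y r hr; simp
    | succ n ih =>
      intro y r hr
      have h1 : (2:ℝ) ^ (n+1) * r = 2 * (2 ^ n * r) := by ring
      rw [h1]
      calc μ (Metric.ball y (2 * (2 ^ n * r)))
          ≤ ENNReal.ofReal Cμ * μ (Metric.ball y (2 ^ n * r)) :=
            hdouble y _ (by positivity)
        _ ≤ ENNReal.ofReal Cμ * ((ENNReal.ofReal Cμ) ^ n * μ (Metric.ball y r)) :=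
            mul_le_mul_right (ih y r hr) _
        _ = (ENNReal.ofReal Cμ) ^ (n+1) * μ (Metric.ball y r) := by ring
  have hΩc : IsClosed (Ωᶜ) := isClosed_compl_iff.mpr hΩopen
  have hdpos : ∀ y ∈ Ω, 0 < Metric.infDist y Ωᶜ := by
    intro y hy
    exact (hΩc.notMem_iff_infDist_pos hΩcne).mp (by simpa using hy)
  have hLc : L * c ≤ 1/3 := by
    rw [le_div_iff₀ (by positivity)] at hcL
    nlinarith
  have hc3 : c ≤ 1/3 := by nlinarith
  refine ⟨⌈Cμ ^ k * N⌉₊, ?_⟩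
  intro x hx
  set d := Metric.infDist x Ωᶜ with hd_def
  have hd : 0 < d := hdpos x hx
  have hballx : Metric.ball x d ⊆ Ω := by
    intro y hy
    by_contra hyc
    have := Metric.infDist_le_dist_of_mem (x := x) (show y ∈ Ωᶜ from hyc)
    rw [dist_comm] at this
    exact absurd (lt_of_le_of_lt this hy) (lt_irrefl _)
  -- per-i geometry
  have key : ∀ i, x ∈ Metric.ball (xc i) (L * (c * Metric.infDist (xc i) Ωᶜ)) →
      (Metric.ball (xc i) (c * Metric.infDist (xc i) Ωᶜ) ⊆ Metric.ball x d ∧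
        μ (Metric.ball x d) ≤ (ENNReal.ofReal Cμ) ^ k *
          μ (Metric.ball (xc i) (c * Metric.infDist (xc i) Ωᶜ))) := by
    intro i hxi
    set di := Metric.infDist (xc i) Ωᶜ with hdi_def
    have hdi : 0 < di := hdpos (xc i) (hxc i)
    rw [Metric.mem_ball] at hxi
    have hdist : dist x (xc i) < di / 3 := by nlinarith [hxi]
    have h1 : d ≤ di + dist x (xc i) := by
      rw [hd_def, hdi_def]
      exact Metric.infDist_le_infDist_add_dist
    have h2 : di ≤ d + dist x (xc i) := by
      rw [hd_def, hdi_def, dist_comm]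
      exact Metric.infDist_le_infDist_add_dist
    have hdu : d < 4/3 * di := by nlinarith
    have hdl : 2/3 * di < d := by nlinarith
    constructor
    · intro y hy
      rw [Metric.mem_ball] at hy ⊢
      have : dist y x ≤ dist y (xc i) + dist (xc i) x := dist_triangle _ _ _
      rw [dist_comm (xc i) x] at this
      nlinarith
    · have hsub : Metric.ball x d ⊆ Metric.ball (xc i) (2 ^ k * (c * di)) := by
        intro y hy
        rw [Metric.mem_ball] at hy ⊢
        have ht : dist y (xc i) ≤ dist y x + dist x (xc i) := dist_triangle _ _ _
        have h53 : 5/3 * di ≤ 2 ^ k * (c * di) := by nlinarith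
        nlinarith
      exact le_trans (measure_mono hsub) (hiter k (xc i) (c * di) (by positivity))
  rw [ENNReal.tsum_eq_iSup_sum]
  refine iSup_le fun s => ?_
  set B : ℕ → Set X := fun i => Metric.ball (xc i) (c * Metric.infDist (xc i) Ωᶜ) with hB
  set F : Finset ℕ := s.filter (fun i =>
    x ∈ Metric.ball (xc i) (L * (c * Metric.infDist (xc i) Ωᶜ))) with hF
  have hsum : ∑ i ∈ s, (Metric.ball (xc i) (L * (c * Metric.infDist (xc i) Ωᶜ))).indicator
      (fun _ => (1 : ℝ≥0∞)) x = (F.card : ℝ≥0∞) := by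
    rw [hF, Finset.card_filter, Nat.cast_sum]
    refine Finset.sum_congr rfl fun i _ => ?_
    by_cases h : x ∈ Metric.ball (xc i) (L * (c * Metric.infDist (xc i) Ωᶜ)) <;>
      simp [Set.indicator_apply, h]
  rw [hsum]
  -- key measure estimate
  have hμpos := (hball x d hd).1
  have hμfin := (hball x d hd).2
  have hstep1 : (F.card : ℝ≥0∞) * μ (Metric.ball x d)
      ≤ (ENNReal.ofReal Cμ) ^ k * ∑ i ∈ F, μ (B i) := by
    rw [Finset.mul_sum]
    calc (F.card : ℝ≥0∞) * μ (Metric.ball x d)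
        = ∑ _i ∈ F, μ (Metric.ball x d) := by
          rw [Finset.sum_const, nsmul_eq_mul]
      _ ≤ ∑ i ∈ F, (ENNReal.ofReal Cμ) ^ k * μ (B i) := by
          refine Finset.sum_le_sum fun i hi => ?_
          have hxi := (Finset.mem_filter.mp hi).2
          exact (key i hxi).2
  have hstep2 : ∑ i ∈ F, μ (B i) ≤ ENNReal.ofReal N * μ (Metric.ball x d) := by
    have hmeas : ∀ i, Measurable ((B i).indicator (fun _ => (1 : ℝ≥0∞))) := by
      intro i
      exact Measurable.indicator measurable_const measurableSet_ball
    have h1 : ∑ i ∈ F, μ (B i)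
        = ∫⁻ y, ∑ i ∈ F, (B i).indicator (fun _ => (1 : ℝ≥0∞)) y ∂μ := by
      rw [lintegral_finset_sum _ (fun i _ => hmeas i)]
      refine Finset.sum_congr rfl fun i _ => ?_
      exact (lintegral_indicator_one measurableSet_ball).symm
    rw [h1]
    have h2 : ∀ y, ∑ i ∈ F, (B i).indicator (fun _ => (1 : ℝ≥0∞)) y
        ≤ (Metric.ball x d).indicator (fun _ => ENNReal.ofReal N) y := by
      intro y
      by_cases hy : y ∈ Metric.ball x d
      · rw [Set.indicator_of_mem hy]
        calc ∑ i ∈ F, (B i).indicator (fun _ => (1 : ℝ≥0∞)) y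
            ≤ ∑' i, (B i).indicator (fun _ => (1 : ℝ≥0∞)) y := ENNReal.sum_le_tsum F
          _ ≤ ENNReal.ofReal N := hover y (hballx hy)
      · rw [Set.indicator_of_notMem hy]
        refine le_of_eq (Finset.sum_eq_zero fun i hi => ?_)
        have hxi := (Finset.mem_filter.mp hi).2
        have hBi := (key i hxi).1
        have : y ∉ B i := fun h => hy (hBi h)
        simp [Set.indicator_of_notMem this]
    calc ∫⁻ y, ∑ i ∈ F, (B i).indicator (fun _ => (1 : ℝ≥0∞)) y ∂μ
        ≤ ∫⁻ y, (Metric.ball x d).indicator (fun _ => ENNReal.ofReal N) y ∂μ :=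
          lintegral_mono h2
      _ = ENNReal.ofReal N * μ (Metric.ball x d) := by
          rw [lintegral_indicator_const measurableSet_ball]
  have hmain : (F.card : ℝ≥0∞) * μ (Metric.ball x d)
      ≤ ((ENNReal.ofReal Cμ) ^ k * ENNReal.ofReal N) * μ (Metric.ball x d) := by
    calc (F.card : ℝ≥0∞) * μ (Metric.ball x d)
        ≤ (ENNReal.ofReal Cμ) ^ k * ∑ i ∈ F, μ (B i) := hstep1
      _ ≤ (ENNReal.ofReal Cμ) ^ k * (ENNReal.ofReal N * μ (Metric.ball x d)) :=
          mul_le_mul_right hstep2 _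
      _ = ((ENNReal.ofReal Cμ) ^ k * ENNReal.ofReal N) * μ (Metric.ball x d) := by ring
  have hcard : (F.card : ℝ≥0∞) ≤ (ENNReal.ofReal Cμ) ^ k * ENNReal.ofReal N :=
    (ENNReal.mul_le_mul_iff_left (ne_of_gt hμpos) (ne_of_lt hμfin)).mp hmain
  refine le_trans hcard ?_
  have hCμ0 : (0:ℝ) ≤ Cμ := le_trans zero_le_one hCμ
  rw [← ENNReal.ofReal_pow hCμ0, ← ENNReal.ofReal_mul (by positivity)]
  calc ENNReal.ofReal (Cμ ^ k * N) ≤ ENNReal.ofReal (⌈Cμ ^ k * N⌉₊ : ℝ) :=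
        ENNReal.ofReal_le_ofReal (Nat.le_ceil _)
    _ = (⌈Cμ ^ k * N⌉₊ : ℝ≥0∞) := ENNReal.ofReal_natCast _
end
end
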